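/- arXiv:1811.12188 — 2 statements merged into one kernel-verified Lean document; each statement's English description precedes it below -/
import Mathlib

section
/- Let A = (Σ_like⁻¹ + Σ_prior⁻¹)⁻¹ and μ_MAP(θ₀) = A(Σ_like⁻¹ μ_like + Σ_prior⁻¹ θ₀). If θ₀ has covariance Σ₀ = Σ_prior + Σ_prior Σ_like⁻¹ Σ_prior, then the covariance of μ_MAP(θ₀) equals Σ_post = (Σ_like⁻¹ + Σ_prior⁻¹)⁻¹. -/
open Matrix MeasureTheory ProbabilityTheory

/-- Componentwise mean of a random vector. -/
noncomputable def vmean {n : ℕ} {Ω : Type*} [MeasureSpace Ω] (X : Ω → Fin n → ℝ) :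
    Fin n → ℝ := fun i => ∫ ω, X ω i

/-- Covariance matrix of a random vector. -/
noncomputable def vcov {n : ℕ} {Ω : Type*} [MeasureSpace Ω] (X : Ω → Fin n → ℝ) :
    Matrix (Fin n) (Fin n) ℝ :=
  Matrix.of fun i j => ∫ ω, (X ω i - vmean X i) * (X ω j - vmean X j)

lemma vcov_affine {n : ℕ} {Ω : Type*} [MeasureSpace Ω] [IsProbabilityMeasure (ℙ : Measure Ω)]
    (B : Matrix (Fin n) (Fin n) ℝ) (c : Fin n → ℝ) (θ : Ω → Fin n → ℝ)
    (hL2 : ∀ i, MemLp (fun ω => θ ω i) 2 ℙ) :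
    vcov (fun ω => B *ᵥ θ ω + c) = B * vcov θ * Bᵀ := by
  have hint : ∀ i, Integrable (fun ω => θ ω i) ℙ :=
    fun i => (hL2 i).integrable (by norm_num)
  -- mean of the affine image
  have hmean : ∀ i, vmean (fun ω => B *ᵥ θ ω + c) i = (∑ j, B i j * vmean θ j) + c i := by
    intro i
    have h1 : Integrable (fun ω => ∑ j, B i j * θ ω j) ℙ :=
      integrable_finset_sum _ fun j _ => (hint j).const_mul _
    calc vmean (fun ω => B *ᵥ θ ω + c) i
        = ∫ ω, (∑ j, B i j * θ ω j) + c i := by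
          simp [vmean, Matrix.mulVec, dotProduct]
      _ = (∫ ω, ∑ j, B i j * θ ω j) + ∫ _ω, c i := integral_add h1 (integrable_const _)
      _ = (∑ j, B i j * vmean θ j) + c i := by
          rw [integral_finset_sum _ fun j _ => (hint j).const_mul _]
          simp [vmean, integral_const_mul]
  -- centered variables
  set d : Fin n → Ω → ℝ := fun j ω => θ ω j - vmean θ j with hd
  have hdL2 : ∀ j, MemLp (d j) 2 ℙ := fun j => (hL2 j).sub (memLp_const _)
  have hcent : ∀ i ω, (B *ᵥ θ ω + c) i - vmean (fun ω => B *ᵥ θ ω + c) i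
      = ∑ j, B i j * d j ω := by
    intro i ω
    rw [hmean i]
    simp [Matrix.mulVec, dotProduct, hd, mul_sub, Finset.sum_sub_distrib, Finset.mul_sum]
  ext i k
  have hprod : ∀ j l, Integrable (fun ω => d j ω * d l ω) ℙ := by
    intro j l
    have h := (hdL2 l).smul (r := 1) (hdL2 j)
    rw [memLp_one_iff_integrable] at h
    exact (by simpa [Pi.smul_apply, smul_eq_mul] using h : Integrable (d j * d l) ℙ)
  calc vcov (fun ω => B *ᵥ θ ω + c) i k
      = ∫ ω, (∑ j, B i j * d j ω) * (∑ l, B k l * d l ω) := by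
        simp only [vcov, Matrix.of_apply]
        congr 1; ext ω; rw [hcent i ω, hcent k ω]
    _ = ∫ ω, ∑ j, ∑ l, B i j * B k l * (d j ω * d l ω) := by
        congr 1; ext ω
        rw [Finset.sum_mul_sum]
        apply Finset.sum_congr rfl; intro j _
        apply Finset.sum_congr rfl; intro l _
        ring
    _ = ∑ j, ∑ l, B i j * B k l * ∫ ω, d j ω * d l ω := by
        rw [integral_finset_sum _ fun j _ => integrable_finset_sum _
          fun l _ => ((hprod j l).const_mul _)]
        apply Finset.sum_congr rfl; intro j _
        rw [integral_finset_sum _ fun l _ => ((hprod j l).const_mul _)]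
        apply Finset.sum_congr rfl; intro l _
        exact integral_const_mul _ _
    _ = (B * vcov θ * Bᵀ) i k := by
        simp only [Matrix.mul_apply, Matrix.transpose_apply, vcov, Matrix.of_apply,
          Finset.sum_mul]
        rw [Finset.sum_comm]
        apply Finset.sum_congr rfl; intro l _
        apply Finset.sum_congr rfl; intro j _
        simp [hd]; ring

/-- If `θ₀` has covariance `Σ₀ = Σ_prior + Σ_prior Σ_like⁻¹ Σ_prior`, then
`μ_MAP(θ₀) = A (Σ_like⁻¹ μ_like + Σ_prior⁻¹ θ₀)` with `A = (Σ_like⁻¹ + Σ_prior⁻¹)⁻¹`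
has covariance `Σ_post = A`. -/
theorem stmt2 {n : ℕ} {Ω : Type*} [MeasureSpace Ω] [IsProbabilityMeasure (ℙ : Measure Ω)]
    (Sp Sl : Matrix (Fin n) (Fin n) ℝ) (hp : Sp.PosDef) (hl : Sl.PosDef)
    (μl : Fin n → ℝ) (θ₀ : Ω → Fin n → ℝ)
    (hL2 : ∀ i, MemLp (fun ω => θ₀ ω i) 2 ℙ)
    (hcov : vcov θ₀ = Sp + Sp * Sl⁻¹ * Sp) :
    vcov (fun ω => (Sl⁻¹ + Sp⁻¹)⁻¹ *ᵥ (Sl⁻¹ *ᵥ μl + Sp⁻¹ *ᵥ θ₀ ω))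
      = (Sl⁻¹ + Sp⁻¹)⁻¹ := by
  set A := (Sl⁻¹ + Sp⁻¹)⁻¹ with hA
  have hfun : (fun ω => A *ᵥ (Sl⁻¹ *ᵥ μl + Sp⁻¹ *ᵥ θ₀ ω))
      = fun ω => (A * Sp⁻¹) *ᵥ θ₀ ω + A *ᵥ (Sl⁻¹ *ᵥ μl) := by
    funext ω
    rw [Matrix.mulVec_add, Matrix.mulVec_mulVec, Matrix.mulVec_mulVec, add_comm]
  rw [hfun, vcov_affine _ _ _ hL2, hcov]
  -- matrix algebra
  have hpu : IsUnit Sp.det := hp.det_pos.ne'.isUnit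
  have hS : (Sl⁻¹ + Sp⁻¹).PosDef := hl.inv.add hp.inv
  have hSu : IsUnit (Sl⁻¹ + Sp⁻¹).det := hS.det_pos.ne'.isUnit
  have hpi : Sp⁻¹ * Sp = 1 := Matrix.nonsing_inv_mul _ hpu
  have hpi' : Sp * Sp⁻¹ = 1 := Matrix.mul_nonsing_inv _ hpu
  have hsymA : Aᵀ = A := by
    have h1 : (Sl⁻¹ + Sp⁻¹).IsHermitian := (hl.inv.add hp.inv).1
    have : (Sl⁻¹ + Sp⁻¹)ᵀ = Sl⁻¹ + Sp⁻¹ := by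
      simpa [Matrix.conjTranspose, Matrix.map_id, Matrix.IsSymm] using h1
    rw [hA, Matrix.transpose_nonsing_inv, this]
  have hsymP : Sp⁻¹ᵀ = Sp⁻¹ := by
    have h1 : Sp⁻¹.IsHermitian := hp.inv.1
    simpa [Matrix.conjTranspose, Matrix.map_id, Matrix.IsSymm] using h1
  have key : Sp⁻¹ * (Sp + Sp * Sl⁻¹ * Sp) * Sp⁻¹ = Sl⁻¹ + Sp⁻¹ := by
    rw [Matrix.mul_add, Matrix.add_mul, hpi]
    rw [show Sp⁻¹ * (Sp * Sl⁻¹ * Sp) = Sl⁻¹ * Sp by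
      rw [← Matrix.mul_assoc, ← Matrix.mul_assoc, hpi, Matrix.one_mul]]
    rw [Matrix.mul_assoc, hpi', Matrix.mul_one, Matrix.one_mul, add_comm]
  calc (A * Sp⁻¹) * (Sp + Sp * Sl⁻¹ * Sp) * (A * Sp⁻¹)ᵀ
      = A * (Sp⁻¹ * (Sp + Sp * Sl⁻¹ * Sp) * Sp⁻¹) * A := by
        rw [Matrix.transpose_mul, hsymA, hsymP]
        noncomm_ring
    _ = A * (Sl⁻¹ + Sp⁻¹) * A := by rw [key]
    _ = A := by
        rw [hA, Matrix.nonsing_inv_mul _ hSu, Matrix.one_mul]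
end

section
/- Let θ₀ ~ N(μ_prior, Σ_prior + Σ_prior Σ_like⁻¹ Σ_prior) be Gaussian. Then μ_MAP(θ₀) = (Σ_like⁻¹ + Σ_prior⁻¹)⁻¹(Σ_like⁻¹ μ_like + Σ_prior⁻¹ θ₀) is Gaussian with mean μ_post and covariance Σ_post = (Σ_like⁻¹ + Σ_prior⁻¹)⁻¹; i.e., the randomized MAP estimate is exactly distributed as the Bayesian posterior N(μ_post, Σ_post). -/
open Matrix MeasureTheory ProbabilityTheory Real

/-- Multivariate Gaussian density on `Fin n → ℝ`. -/
noncomputable def gaussDensity {n : ℕ} (μ : Fin n → ℝ) (S : Matrix (Fin n) (Fin n) ℝ)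
    (x : Fin n → ℝ) : ℝ :=
  ((2 * π) ^ n * S.det) ^ (-(1/2 : ℝ)) *
    Real.exp (-(1/2) * ((x - μ) ⬝ᵥ (S⁻¹ *ᵥ (x - μ))))

/-- The Gaussian measure `N(μ, S)` on `Fin n → ℝ`, as Lebesgue measure with the
Gaussian density. -/
noncomputable def gaussMeasure {n : ℕ} (μ : Fin n → ℝ) (S : Matrix (Fin n) (Fin n) ℝ) :
    Measure (Fin n → ℝ) :=
  volume.withDensity fun x => ENNReal.ofReal (gaussDensity μ S x)

lemma measurable_gaussDensity_ofReal {n : ℕ} (μ : Fin n → ℝ) (S : Matrix (Fin n) (Fin n) ℝ) :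
    Measurable fun x => ENNReal.ofReal (gaussDensity μ S x) := by
  have hq : Continuous fun x : Fin n → ℝ => (x - μ) ⬝ᵥ (S⁻¹ *ᵥ (x - μ)) := by
    simp only [dotProduct, Matrix.mulVec]
    fun_prop
  have : Continuous fun x => gaussDensity μ S x := by
    unfold gaussDensity
    exact continuous_const.mul ((continuous_const.mul hq).rexp)
  exact ENNReal.measurable_ofReal.comp this.measurable

lemma map_withDensity_comp {α β : Type*} [MeasurableSpace α] [MeasurableSpace β]
    (μ : Measure α) {f : α → β} (hf : Measurable f) {g : β → ENNReal} (hg : Measurable g) :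
    Measure.map f (μ.withDensity fun x => g (f x)) = (Measure.map f μ).withDensity g := by
  ext s hs
  rw [Measure.map_apply hf hs, withDensity_apply _ hs, withDensity_apply _ (hf hs),
    setLIntegral_map hs hg hf]

lemma gaussDensity_affine {n : ℕ} (A : Matrix (Fin n) (Fin n) ℝ) (b μ : Fin n → ℝ)
    (S : Matrix (Fin n) (Fin n) ℝ) (hA : A.det ≠ 0) (hS : 0 < S.det) (x : Fin n → ℝ) :
    gaussDensity μ S x = |A.det| * gaussDensity (A *ᵥ μ + b) (A * S * Aᵀ) (A *ᵥ x + b) := by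
  have hAU : IsUnit A.det := hA.isUnit
  have hSU : IsUnit S.det := hS.ne'.isUnit
  unfold gaussDensity
  have hdiff : (A *ᵥ x + b) - (A *ᵥ μ + b) = A *ᵥ (x - μ) := by
    rw [add_sub_add_right_eq_sub, ← Matrix.mulVec_sub]
  rw [hdiff]
  set v := x - μ with hv
  -- quadratic form identity
  have hquad : (A *ᵥ v) ⬝ᵥ ((A * S * Aᵀ)⁻¹ *ᵥ (A *ᵥ v)) = v ⬝ᵥ (S⁻¹ *ᵥ v) := by
    rw [Matrix.mul_inv_rev, Matrix.mul_inv_rev]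
    have h1 : (Aᵀ⁻¹ * (S⁻¹ * A⁻¹)) *ᵥ (A *ᵥ v) = Aᵀ⁻¹ *ᵥ (S⁻¹ *ᵥ v) := by
      rw [Matrix.mulVec_mulVec, Matrix.mul_assoc, Matrix.mul_assoc,
        Matrix.nonsing_inv_mul A hAU, Matrix.mul_one, ← Matrix.mulVec_mulVec]
    rw [h1, Matrix.dotProduct_mulVec, ← Matrix.transpose_nonsing_inv,
      Matrix.vecMul_transpose, Matrix.mulVec_mulVec, Matrix.nonsing_inv_mul A hAU,
      Matrix.one_mulVec]
  rw [hquad]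
  -- normalization constant identity
  have hdet : (A * S * Aᵀ).det = ((2:ℝ))⁻¹ * 0 + (S.det * A.det ^ 2) := by
    rw [Matrix.det_mul, Matrix.det_mul, Matrix.det_transpose]; ring
  have hdet' : (A * S * Aᵀ).det = S.det * A.det ^ 2 := by rw [hdet]; ring
  have h2pi : (0:ℝ) ≤ (2 * π) ^ n := by positivity
  have hbase : (2 * π) ^ n * (A * S * Aᵀ).det = ((2 * π) ^ n * S.det) * A.det ^ 2 := by
    rw [hdet']; ring
  have hnorm : ((2 * π) ^ n * (A * S * Aᵀ).det) ^ (-(1/2 : ℝ))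
      = |A.det|⁻¹ * ((2 * π) ^ n * S.det) ^ (-(1/2 : ℝ)) := by
    rw [hbase, Real.mul_rpow (by positivity) (sq_nonneg _)]
    have : (A.det ^ 2 : ℝ) ^ (-(1/2 : ℝ)) = |A.det|⁻¹ := by
      rw [← sq_abs, ← Real.rpow_natCast |A.det| 2, ← Real.rpow_mul (abs_nonneg _)]
      norm_num [Real.rpow_neg_one]
    rw [this]; ring
  rw [hnorm]
  have habs : |A.det| ≠ 0 := abs_ne_zero.mpr hA
  field_simp

lemma gaussMeasure_map_affine {n : ℕ} (A : Matrix (Fin n) (Fin n) ℝ) (b μ : Fin n → ℝ)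
    (S : Matrix (Fin n) (Fin n) ℝ) (hA : A.det ≠ 0) (hS : 0 < S.det) :
    Measure.map (fun x => A *ᵥ x + b) (gaussMeasure μ S)
      = gaussMeasure (A *ᵥ μ + b) (A * S * Aᵀ) := by
  set f : (Fin n → ℝ) → (Fin n → ℝ) := fun x => A *ᵥ x + b with hfdef
  have hfc : Continuous f := by
    have := (Matrix.mulVecLin A).continuous_on_pi
    exact this.add (continuous_const : Continuous fun _ : Fin n → ℝ => b)
  have hf : Measurable f := hfc.measurable
  have hg : Measurable fun y => ENNReal.ofReal (gaussDensity (A *ᵥ μ + b) (A * S * Aᵀ) y) :=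
    measurable_gaussDensity_ofReal _ _
  have key : (fun x => ENNReal.ofReal (gaussDensity μ S x))
      = ENNReal.ofReal |A.det| • fun x =>
          ENNReal.ofReal (gaussDensity (A *ᵥ μ + b) (A * S * Aᵀ) (f x)) := by
    funext x
    simp only [Pi.smul_apply, smul_eq_mul]
    rw [gaussDensity_affine A b μ S hA hS x, ENNReal.ofReal_mul (abs_nonneg _)]
  have hmapvol : Measure.map f volume = ENNReal.ofReal |A.det⁻¹| • volume := by
    have hcomp : f = (fun y => y + b) ∘ ⇑(Matrix.toLin' A) := by
      funext x; simp [hfdef, Matrix.toLin'_apply]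
    rw [hcomp, ← Measure.map_map (measurable_add_const b)
      (LinearMap.continuous_on_pi _).measurable,
      Real.map_matrix_volume_pi_eq_smul_volume_pi hA, Measure.map_smul,
      map_add_right_eq_self]
  have hcancel : ENNReal.ofReal |A.det| * ENNReal.ofReal |A.det⁻¹| = 1 := by
    rw [← ENNReal.ofReal_mul (abs_nonneg _), abs_inv, mul_inv_cancel₀ (abs_ne_zero.mpr hA)]
    exact ENNReal.ofReal_one
  calc Measure.map f (gaussMeasure μ S)
      = Measure.map f (volume.withDensity (ENNReal.ofReal |A.det| • fun x =>
          ENNReal.ofReal (gaussDensity (A *ᵥ μ + b) (A * S * Aᵀ) (f x)))) := by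
        rw [gaussMeasure, key]
    _ = ENNReal.ofReal |A.det| • Measure.map f (volume.withDensity fun x =>
          ENNReal.ofReal (gaussDensity (A *ᵥ μ + b) (A * S * Aᵀ) (f x))) := by
        rw [withDensity_smul _ (show Measurable fun x =>
          ENNReal.ofReal (gaussDensity (A *ᵥ μ + b) (A * S * Aᵀ) (f x)) from hg.comp hf),
          Measure.map_smul]
    _ = ENNReal.ofReal |A.det| • (Measure.map f volume).withDensity fun y =>
          ENNReal.ofReal (gaussDensity (A *ᵥ μ + b) (A * S * Aᵀ) y) := by
        rw [map_withDensity_comp volume hf hg]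
    _ = gaussMeasure (A *ᵥ μ + b) (A * S * Aᵀ) := by
        rw [hmapvol, withDensity_smul_measure, smul_smul, hcancel, one_smul, gaussMeasure]

/-- If `θ₀ ~ N(μ_prior, Σ_prior + Σ_prior Σ_like⁻¹ Σ_prior)` then the randomized MAP
estimate `μ_MAP(θ₀) = (Σ_like⁻¹+Σ_prior⁻¹)⁻¹ (Σ_like⁻¹ μ_like + Σ_prior⁻¹ θ₀)` is
distributed as the posterior `N(μ_post, Σ_post)` with
`Σ_post = (Σ_like⁻¹+Σ_prior⁻¹)⁻¹` and `μ_post = Σ_post (Σ_like⁻¹ μ_like + Σ_prior⁻¹ μ_prior)`. -/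
theorem stmt5 {n : ℕ} {Ω : Type*} [MeasureSpace Ω] [IsProbabilityMeasure (ℙ : Measure Ω)]
    (Sp Sl : Matrix (Fin n) (Fin n) ℝ) (hp : Sp.PosDef) (hl : Sl.PosDef)
    (μp μl : Fin n → ℝ) (θ₀ : Ω → Fin n → ℝ) (hmeas : Measurable θ₀)
    (hdist : Measure.map θ₀ ℙ = gaussMeasure μp (Sp + Sp * Sl⁻¹ * Sp)) :
    Measure.map (fun ω => (Sl⁻¹ + Sp⁻¹)⁻¹ *ᵥ (Sl⁻¹ *ᵥ μl + Sp⁻¹ *ᵥ θ₀ ω)) ℙ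
      = gaussMeasure ((Sl⁻¹ + Sp⁻¹)⁻¹ *ᵥ (Sl⁻¹ *ᵥ μl + Sp⁻¹ *ᵥ μp)) ((Sl⁻¹ + Sp⁻¹)⁻¹) := by
  set K : Matrix (Fin n) (Fin n) ℝ := Sl⁻¹ + Sp⁻¹ with hKdef
  have hK : K.PosDef := hl.inv.add hp.inv
  set A : Matrix (Fin n) (Fin n) ℝ := K⁻¹ * Sp⁻¹ with hAdef
  set b : Fin n → ℝ := K⁻¹ *ᵥ (Sl⁻¹ *ᵥ μl) with hbdef
  have hSpU : IsUnit Sp.det := hp.det_pos.ne'.isUnit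
  have hKU : IsUnit K.det := hK.det_pos.ne'.isUnit
  have hAdet : A.det ≠ 0 := by
    rw [hAdef, Matrix.det_mul]
    exact (mul_pos hK.inv.det_pos hp.inv.det_pos).ne'
  have hSpT : Spᵀ = Sp := by
    have := hp.isHermitian.eq
    rwa [Matrix.conjTranspose_eq_transpose_of_trivial] at this
  have hKT : Kᵀ = K := by
    have := hK.isHermitian.eq
    rwa [Matrix.conjTranspose_eq_transpose_of_trivial] at this
  -- Σ = Sp * K * Sp
  have hSigma : Sp + Sp * Sl⁻¹ * Sp = Sp * K * Sp := by
    rw [hKdef, Matrix.mul_add, Matrix.mul_nonsing_inv Sp hSpU, Matrix.add_mul, Matrix.one_mul,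
      add_comm]
  have hSdet : 0 < (Sp + Sp * Sl⁻¹ * Sp).det := by
    rw [hSigma, Matrix.det_mul, Matrix.det_mul]
    exact mul_pos (mul_pos hp.det_pos hK.det_pos) hp.det_pos
  -- the function is the affine map composed with θ₀
  have hfun : (fun ω => K⁻¹ *ᵥ (Sl⁻¹ *ᵥ μl + Sp⁻¹ *ᵥ θ₀ ω))
      = (fun x => A *ᵥ x + b) ∘ θ₀ := by
    funext ω
    simp only [Function.comp_apply, Matrix.mulVec_add, Matrix.mulVec_mulVec, hAdef, hbdef,
      add_comm]
  -- covariance identity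
  have hAT : Aᵀ = Sp⁻¹ * K⁻¹ := by
    rw [hAdef, Matrix.transpose_mul, Matrix.transpose_nonsing_inv, Matrix.transpose_nonsing_inv,
      hSpT, hKT]
  have hcov : A * (Sp + Sp * Sl⁻¹ * Sp) * Aᵀ = K⁻¹ := by
    rw [hSigma, hAT, hAdef]
    calc K⁻¹ * Sp⁻¹ * (Sp * K * Sp) * (Sp⁻¹ * K⁻¹)
        = K⁻¹ * ((Sp⁻¹ * Sp) * K * (Sp * Sp⁻¹)) * K⁻¹ := by
          simp only [Matrix.mul_assoc]
      _ = K⁻¹ * K * K⁻¹ := by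
          rw [Matrix.nonsing_inv_mul Sp hSpU, Matrix.mul_nonsing_inv Sp hSpU,
            Matrix.one_mul, Matrix.mul_one]
      _ = K⁻¹ := by rw [Matrix.nonsing_inv_mul K hKU, Matrix.one_mul]
  -- mean identity
  have hmean : A *ᵥ μp + b = K⁻¹ *ᵥ (Sl⁻¹ *ᵥ μl + Sp⁻¹ *ᵥ μp) := by
    simp only [Matrix.mulVec_add, Matrix.mulVec_mulVec, hAdef, hbdef]
    rw [add_comm]
  have hfmeas : Measurable fun x : Fin n → ℝ => A *ᵥ x + b := by
    have := (Matrix.mulVecLin A).continuous_on_pi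
    exact ((by exact this :
      Continuous fun x : Fin n → ℝ => A *ᵥ x).add continuous_const).measurable
  rw [hfun, ← Measure.map_map hfmeas hmeas, hdist,
    gaussMeasure_map_affine A b μp _ hAdet hSdet, hcov, hmean]
end
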